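/- Assume δ_1 > 1. Then for any 0 < r ≤ r_0 and x, z ∈ ℝ^d, the quantity |∫_{r ≤ |y-x| < r_0} ∇b_{z,r}(x)·(y-x) K(x,y) dy| is at most 4 ω_d Λ (1/(a_1(δ_1-1))) f(r^{-1}), where b_{z,r}(x) = (1 − |x-z|^2/r^2)_+^2. -/

import Mathlib

open MeasureTheory Real Set Metric

noncomputable def bumpFn (d : ℕ) (z : EuclideanSpace ℝ (Fin d)) (r : ℝ)
    (x : EuclideanSpace ℝ (Fin d)) : ℝ :=
  (max (1 - (dist x z / r) ^ 2) 0) ^ 2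

/-!
The bump has `‖∇b_{z,r}‖ ≤ 4 / r`, and `|K| ≤ Λ J`, so the integrand is bounded by the radial
function `4 Λ f(ρ⁻¹) / (r ρ^(d-1))` of `ρ = |y - x|`. In polar coordinates the Jacobian `ρ^(d-1)`
cancels this power, leaving `ω_d (4 Λ / r) ∫_r^{r₀} f(ρ⁻¹) dρ`. The lower scaling bound gives
`f(ρ⁻¹) ≤ f(r⁻¹) (r / ρ)^δ₁ / a₁`, and for `δ₁ > 1` we have `∫_r^∞ (r / ρ)^δ₁ dρ = r / (δ₁ - 1)`.
-/

open InnerProductSpace Module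

lemma hasDerivAt_sq_max_one_sub_zero (t : ℝ) :
    HasDerivAt (fun s : ℝ => max (1 - s) 0 ^ 2) (-2 * max (1 - t) 0) t := by
  have hpoly (t : ℝ) : HasDerivAt (fun s : ℝ => (1 - s) ^ 2) (-2 * (1 - t)) t := by
    refine (((hasDerivAt_id t).const_sub 1).fun_pow 2).congr_deriv ?_
    simp only [id, Nat.cast_ofNat]; ring
  rcases lt_trichotomy t 1 with ht | rfl | ht
  · rw [max_eq_left (by linarith)]
    refine (hpoly t).congr_of_eventuallyEq ?_
    filter_upwards [Iio_mem_nhds ht] with s hs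
    rw [max_eq_left (by linarith [hs.out])]
  · have hleft : HasDerivWithinAt (fun s : ℝ => max (1 - s) 0 ^ 2) 0 (Iic 1) 1 := by
      refine ((hpoly 1).hasDerivWithinAt.congr (fun s hs => ?_) (by simp)).congr_deriv (by ring)
      rw [max_eq_left (by linarith [hs.out])]
    have hright : HasDerivWithinAt (fun s : ℝ => max (1 - s) 0 ^ 2) 0 (Ici 1) 1 := by
      refine (hasDerivWithinAt_const 1 _ (0 : ℝ)).congr (fun s hs => ?_) (by simp)
      rw [max_eq_right (by linarith [hs.out])]; ring
    simpa [← hasDerivWithinAt_univ] using hleft.union hright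
  · rw [max_eq_right (by linarith), mul_zero]
    refine (hasDerivAt_const t (0 : ℝ)).congr_of_eventuallyEq ?_
    filter_upwards [Ioi_mem_nhds ht] with s hs
    rw [max_eq_right (by linarith [hs.out])]; ring

lemma hasGradientAt_bumpFn (d : ℕ) (z x : EuclideanSpace ℝ (Fin d)) (r : ℝ) :
    HasGradientAt (bumpFn d z r)
      ((-4 / r ^ 2 * max (1 - (dist x z / r) ^ 2) 0) • (x - z)) x := by
  have hq : HasFDerivAt (fun y : EuclideanSpace ℝ (Fin d) => ‖y - z‖ ^ 2 / r ^ 2)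
      ((r ^ 2)⁻¹ • (2 • innerSL ℝ (x - z))) x := by
    simpa [div_eq_mul_inv, mul_comm] using
      ((hasFDerivAt_id x).sub_const z).norm_sq.mul_const (r ^ 2)⁻¹
  have hb : bumpFn d z r =
      (fun s : ℝ => max (1 - s) 0 ^ 2) ∘ fun y => ‖y - z‖ ^ 2 / r ^ 2 := by
    funext y
    simp only [bumpFn, Function.comp_apply, dist_eq_norm, div_pow]
  have hdual : toDual ℝ _ ((-4 / r ^ 2 * max (1 - (dist x z / r) ^ 2) 0) • (x - z)) =
      (-2 * max (1 - ‖x - z‖ ^ 2 / r ^ 2) 0) • (r ^ 2)⁻¹ • (2 • innerSL ℝ (x - z)) := by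
    ext v
    simp only [toDual_apply_apply, FunLike.coe_smul, Pi.smul_apply, innerSL_apply_apply,
      real_inner_smul_left, smul_eq_mul, dist_eq_norm, div_pow]
    ring
  rw [hasGradientAt_iff_hasFDerivAt, hb, hdual]
  exact (hasDerivAt_sq_max_one_sub_zero _).comp_hasFDerivAt x hq

lemma norm_gradient_bumpFn_le (d : ℕ) (z x : EuclideanSpace ℝ (Fin d)) {r : ℝ} (hr : 0 < r) :
    ‖gradient (bumpFn d z r) x‖ ≤ 4 / r := by
  set u := dist x z / r with hu_def
  have hu : 0 ≤ u := by positivity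
  have key : max (1 - u ^ 2) 0 * u ≤ 1 := by
    rcases le_total u 1 with h | h
    · rw [max_eq_left (by nlinarith)]; nlinarith
    · rw [max_eq_right (by nlinarith)]; simp
  rw [(hasGradientAt_bumpFn d z x r).gradient, norm_smul, ← dist_eq_norm]
  calc ‖-4 / r ^ 2 * max (1 - u ^ 2) 0‖ * dist x z = 4 / r * (max (1 - u ^ 2) 0 * u) := by
        have hdist : dist x z = u * r := by rw [hu_def]; field_simp
        rw [norm_mul, norm_div, norm_neg, norm_pow, Real.norm_of_nonneg (le_max_right _ _),
          Real.norm_of_nonneg hr.le, Real.norm_ofNat, hdist]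
        field_simp
    _ ≤ 4 / r := by
        grw [key, mul_one]

lemma abs_inner_gradient_bumpFn_le (d : ℕ) (z x v : EuclideanSpace ℝ (Fin d)) {r : ℝ}
    (hr : 0 < r) : |inner ℝ (gradient (bumpFn d z r) x) v| ≤ 4 / r * ‖v‖ :=
  (abs_real_inner_le_norm _ _).trans (by gcongr; exact norm_gradient_bumpFn_le d z x hr)

lemma abs_le_of_mul_le_of_le_mul {a b j k : ℝ} (ha : 0 ≤ a) (hj : 0 ≤ j) (hak : a * j ≤ k)
    (hkb : k ≤ b * j) : |k| ≤ b * j :=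
  abs_le.2 ⟨by nlinarith [mul_nonneg ha hj], hkb⟩

lemma norm_inner_gradient_bumpFn_mul_le {d : ℕ} (hd : 1 ≤ d) {x y : EuclideanSpace ℝ (Fin d)}
    (z : EuclideanSpace ℝ (Fin d)) {f : ℝ → ℝ} {r lam Lam j k : ℝ} (hr : 0 < r) (hlam : 0 ≤ lam)
    (hρ : 0 < dist y x) (hf : 0 ≤ f (dist y x)⁻¹)
    (hj : j = f (dist y x)⁻¹ / dist y x ^ (d : ℝ)) (hk : lam * j ≤ k ∧ k ≤ Lam * j) :
    ‖inner ℝ (gradient (bumpFn d z r) x) (y - x) * k‖ ≤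
      4 * Lam / r * f (dist y x)⁻¹ / dist y x ^ (d - 1) := by
  replace hj : j = f (dist y x)⁻¹ / dist y x ^ (d - 1) / dist y x := by
    rw [hj, rpow_natCast, div_div, ← pow_succ, Nat.sub_add_cancel hd]
  have hj0 : 0 ≤ j := by rw [hj]; positivity
  calc ‖inner ℝ (gradient (bumpFn d z r) x) (y - x) * k‖
      ≤ 4 / r * dist y x * (Lam * j) := by
        rw [norm_mul, Real.norm_eq_abs, Real.norm_eq_abs, dist_eq_norm]
        gcongr
        · exact abs_inner_gradient_bumpFn_le d z x (y - x) hr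
        · exact abs_le_of_mul_le_of_le_mul hlam hj0 hk.1 hk.2
    _ = 4 * Lam / r * f (dist y x)⁻¹ / dist y x ^ (d - 1) := by rw [hj]; field_simp

section Polar

variable {E F : Type*} [NormedAddCommGroup E] [NormedAddCommGroup F]

lemma indicator_annulus_eq (g : ℝ → F) (x : E) (r R : ℝ) :
    {y : E | r ≤ dist y x ∧ dist y x < R}.indicator (fun y => g (dist y x)) =
      fun y => (Ico r R).indicator g ‖y - x‖ := by
  ext y
  simp only [indicator_apply, mem_ofPred_eq, mem_Ico, dist_eq_norm]

variable [MeasurableSpace E] [BorelSpace E]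

lemma measurableSet_annulus (x : E) (r R : ℝ) :
    MeasurableSet {y : E | r ≤ dist y x ∧ dist y x < R} :=
  measurableSet_Ico.preimage (continuous_id.dist continuous_const).measurable

variable [NormedSpace ℝ E] [FiniteDimensional ℝ E] [NormedSpace ℝ F] [Nontrivial E]
  (μ : Measure E) [μ.IsAddHaarMeasure]

lemma integrableOn_annulus_iff (g : ℝ → F) (x : E) {r : ℝ} (hr : 0 < r) (R : ℝ) :
    IntegrableOn (fun y => g (dist y x)) {y | r ≤ dist y x ∧ dist y x < R} μ ↔
      IntegrableOn (fun ρ => ρ ^ (finrank ℝ E - 1) • g ρ) (Ico r R) := by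
  rw [← integrable_indicator_iff (measurableSet_annulus x r R)]
  have hIoi : Ico r R ∩ Ioi 0 = Ico r R := inter_eq_left.2 fun ρ hρ => hr.trans_le hρ.1
  have htrans : Integrable (fun y => (Ico r R).indicator g ‖y - x‖) μ ↔
      Integrable (fun v => (Ico r R).indicator g ‖v‖) μ :=
    ⟨fun h => by simpa using h.comp_sub_right (-x), fun h => h.comp_sub_right x⟩
  rw [indicator_annulus_eq, htrans, integrable_fun_norm_addHaar, ← indicator_smul,
    integrableOn_indicator_iff measurableSet_Ico, hIoi]

lemma setIntegral_annulus_eq (g : ℝ → F) (x : E) {r : ℝ} (hr : 0 < r) (R : ℝ) :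
    ∫ y in {y | r ≤ dist y x ∧ dist y x < R}, g (dist y x) ∂μ =
      finrank ℝ E • μ.real (ball 0 1) • ∫ ρ in Ico r R, ρ ^ (finrank ℝ E - 1) • g ρ := by
  rw [← integral_indicator (measurableSet_annulus x r R)]
  have hIoi : Ioi (0 : ℝ) ∩ Ico r R = Ico r R := inter_eq_right.2 fun ρ hρ => hr.trans_le hρ.1
  rw [indicator_annulus_eq, integral_sub_right_eq_self (fun v => (Ico r R).indicator g ‖v‖) x,
    integral_fun_norm_addHaar, ← indicator_smul, setIntegral_indicator measurableSet_Ico, hIoi]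

theorem norm_setIntegral_annulus_le (φ : E → F) (h : ℝ → ℝ) (x : E) {r : ℝ} (hr : 0 < r) (R : ℝ)
    (hh : IntegrableOn h (Ico r R))
    (hφ : ∀ y ∈ {y | r ≤ dist y x ∧ dist y x < R},
      ‖φ y‖ ≤ h (dist y x) / dist y x ^ (finrank ℝ E - 1)) :
    ‖∫ y in {y | r ≤ dist y x ∧ dist y x < R}, φ y ∂μ‖ ≤
      finrank ℝ E * μ.real (ball 0 1) * ∫ ρ in Ico r R, h ρ := by
  set G : ℝ → ℝ := fun ρ => h ρ / ρ ^ (finrank ℝ E - 1)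
  have hG : ∀ ρ ∈ Ico r R, ρ ^ (finrank ℝ E - 1) • G ρ = h ρ := fun ρ hρ => by
    have : 0 < ρ := hr.trans_le hρ.1
    simp only [G, smul_eq_mul]
    field_simp
  have hGint : IntegrableOn (fun y => G (dist y x)) {y | r ≤ dist y x ∧ dist y x < R} μ :=
    (integrableOn_annulus_iff μ G x hr R).2
      (hh.congr_fun (fun ρ hρ => (hG ρ hρ).symm) measurableSet_Ico)
  calc ‖∫ y in {y | r ≤ dist y x ∧ dist y x < R}, φ y ∂μ‖
      ≤ ∫ y in {y | r ≤ dist y x ∧ dist y x < R}, G (dist y x) ∂μ :=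
        norm_integral_le_of_norm_le hGint
          (ae_restrict_of_forall_mem (measurableSet_annulus x r R) hφ)
    _ = _ := by
        rw [setIntegral_annulus_eq μ G x hr, setIntegral_congr_fun measurableSet_Ico hG,
          nsmul_eq_mul, smul_eq_mul, mul_assoc]

end Polar

theorem finrank_mul_volume_real_ball_zero_one {E : Type*} [NormedAddCommGroup E]
    [InnerProductSpace ℝ E] [FiniteDimensional ℝ E] [MeasurableSpace E] [BorelSpace E]
    [Nontrivial E] :
    finrank ℝ E * volume.real (ball (0 : E) 1) =
      2 * π ^ ((finrank ℝ E : ℝ) / 2) / Gamma (finrank ℝ E / 2) := by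
  have hn : (0 : ℝ) < finrank ℝ E := by exact_mod_cast finrank_pos
  rw [measureReal_def, InnerProductSpace.volume_ball, ENNReal.ofReal_one, one_pow, one_mul,
    ENNReal.toReal_ofReal (by positivity), Gamma_add_one (by positivity), sqrt_eq_rpow,
    ← rpow_natCast, ← rpow_mul pi_pos.le]
  field_simp

section Radial

variable {f : ℝ → ℝ}

lemma integrableOn_Ico_comp_inv (hf : MonotoneOn f (Ioi 0)) {r : ℝ} (hr : 0 < r) (R : ℝ) :
    IntegrableOn (fun ρ => f ρ⁻¹) (Ico r R) := by
  have hanti : AntitoneOn (fun ρ => f ρ⁻¹) (Icc r R) := fun a ha b hb hab =>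
    hf (inv_pos.2 (hr.trans_le hb.1)) (inv_pos.2 (hr.trans_le ha.1))
      (inv_anti₀ (hr.trans_le ha.1) hab)
  exact (hanti.integrableOn_isCompact isCompact_Icc).mono_set Ico_subset_Icc_self

variable {r0 a1 d1 : ℝ}
  (hscale : ∀ s t, 1 ≤ s → 1 / r0 ≤ t → a1 * s ^ d1 * f t ≤ f (s * t))
include hscale

lemma apply_inv_le_of_scaling (ha1 : 0 < a1) {r ρ : ℝ} (hr : 0 < r) (hrρ : r ≤ ρ) (hρ : ρ ≤ r0) :
    f ρ⁻¹ ≤ f r⁻¹ / a1 * r ^ d1 * ρ ^ (-d1) := by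
  have hρ0 : 0 < ρ := hr.trans_le hrρ
  have h := hscale (ρ / r) ρ⁻¹ ((one_le_div hr).2 hrρ) (by rw [one_div]; exact inv_anti₀ hρ0 hρ)
  rw [show ρ / r * ρ⁻¹ = r⁻¹ by field_simp, div_rpow hρ0.le hr.le] at h
  have hpos : 0 < a1 * (ρ ^ d1 / r ^ d1) := by positivity
  calc f ρ⁻¹ = a1 * (ρ ^ d1 / r ^ d1) * f ρ⁻¹ / (a1 * (ρ ^ d1 / r ^ d1)) := by field_simp
    _ ≤ f r⁻¹ / (a1 * (ρ ^ d1 / r ^ d1)) := by gcongr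
    _ = f r⁻¹ / a1 * r ^ d1 * ρ ^ (-d1) := by rw [rpow_neg hρ0.le]; field_simp

lemma integral_Ico_comp_inv_le (ha1 : 0 < a1) (hd1 : 1 < d1) (hf : MonotoneOn f (Ioi 0))
    {r : ℝ} (hr : 0 < r) (hfr : 0 ≤ f r⁻¹) :
    ∫ ρ in Ico r r0, f ρ⁻¹ ≤ f r⁻¹ * r / (a1 * (d1 - 1)) := by
  set c := f r⁻¹ / a1 * r ^ d1
  have hrpow : IntegrableOn (fun ρ : ℝ => ρ ^ (-d1)) (Ici r) :=
    (integrableOn_Ici_iff_integrableOn_Ioi enorm_ne_top).2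
      (integrableOn_Ioi_rpow_of_lt (by linarith) hr)
  calc ∫ ρ in Ico r r0, f ρ⁻¹
      ≤ ∫ ρ in Ico r r0, c * ρ ^ (-d1) :=
        setIntegral_mono_on (integrableOn_Ico_comp_inv hf hr r0)
          ((hrpow.mono_set Ico_subset_Ici_self).const_mul c) measurableSet_Ico
          fun ρ hρ => apply_inv_le_of_scaling hscale ha1 hr hρ.1 hρ.2.le
    _ = c * ∫ ρ in Ico r r0, ρ ^ (-d1) := integral_const_mul _ _
    _ ≤ c * ∫ ρ in Ici r, ρ ^ (-d1) := by
        gcongr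
        · filter_upwards [ae_restrict_mem measurableSet_Ici] with ρ hρ
          exact rpow_nonneg (hr.le.trans hρ) _
        · exact Ico_subset_Ici_self
    _ = f r⁻¹ * r / (a1 * (d1 - 1)) := by
        rw [integral_Ici_eq_integral_Ioi, integral_Ioi_rpow_of_lt (by linarith) hr]
        have hpow : r ^ d1 * r ^ (-d1 + 1) = r := by rw [← rpow_add hr]; simp
        have hd1' : -d1 + 1 ≠ 0 := by linarith
        have hd1'' : d1 - 1 ≠ 0 := by linarith
        calc c * (-r ^ (-d1 + 1) / (-d1 + 1))
            = f r⁻¹ / a1 * (r ^ d1 * r ^ (-d1 + 1)) / (d1 - 1) := by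
              simp only [c]; field_simp; ring
          _ = f r⁻¹ * r / (a1 * (d1 - 1)) := by rw [hpow]; field_simp

end Radial

theorem stmt8_general (d : ℕ) (hd : 1 ≤ d) (r0 a1 a2 d1 d2 lam Lam : ℝ) (f : ℝ → ℝ)
    (J K : EuclideanSpace ℝ (Fin d) → EuclideanSpace ℝ (Fin d) → ℝ)
    (ha1 : 0 < a1) (hd1' : 1 < d1)
    (hlam : 0 < lam) (hLam : lam ≤ Lam)
    (hf0 : ∀ s, 0 ≤ s → 0 ≤ f s)
    (hmono : ∀ s t, 0 ≤ s → s ≤ t → f s ≤ f t)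
    (hscale : ∀ s t, 1 ≤ s → 1/r0 ≤ t →
      a1 * s ^ d1 * f t ≤ f (s * t) ∧ f (s * t) ≤ a2 * s ^ d2 * f t)
    (hJ : ∀ x y, 0 < dist x y → dist x y < r0 →
      J x y = f (dist x y)⁻¹ / (dist x y) ^ (d : ℝ))
    (hK : ∀ x y, x ≠ y → lam * J x y ≤ K x y ∧ K x y ≤ Lam * J x y) :
    ∀ r : ℝ, 0 < r → r ≤ r0 → ∀ x z : EuclideanSpace ℝ (Fin d),
      |∫ y in {y : EuclideanSpace ℝ (Fin d) | r ≤ dist y x ∧ dist y x < r0},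
          (inner ℝ (gradient (bumpFn d z r) x) (y - x) : ℝ) * K x y| ≤
        4 * (2 * Real.pi ^ ((d:ℝ)/2) / Real.Gamma ((d:ℝ)/2)) * Lam *
          (1 / (a1 * (d1 - 1))) * f r⁻¹ := by
  intro r hr _ x z
  have : Nontrivial (EuclideanSpace ℝ (Fin d)) :=
    Module.nontrivial_of_finrank_pos (R := ℝ) (by rw [finrank_euclideanSpace_fin]; omega)
  have hfmono : MonotoneOn f (Ioi 0) := fun s hs _ _ hst => hmono _ _ (le_of_lt hs) hst
  have hLam0 : 0 ≤ Lam := hlam.le.trans hLam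
  have hbound : ∀ y ∈ {y | r ≤ dist y x ∧ dist y x < r0},
      ‖inner ℝ (gradient (bumpFn d z r) x) (y - x) * K x y‖ ≤
        4 * Lam / r * f (dist y x)⁻¹ / dist y x ^ (d - 1) := by
    rintro y ⟨hry, hyr0⟩
    have hρ : 0 < dist y x := hr.trans_le hry
    refine norm_inner_gradient_bumpFn_mul_le hd z hr hlam.le hρ (hf0 _ (by positivity)) ?_
      (hK x y (dist_pos.1 hρ).symm)
    rw [hJ x y (by rwa [dist_comm]) (by rwa [dist_comm]), dist_comm]
  have hsphere := finrank_mul_volume_real_ball_zero_one (E := EuclideanSpace ℝ (Fin d))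
  rw [finrank_euclideanSpace_fin] at hsphere
  calc |∫ y in {y | r ≤ dist y x ∧ dist y x < r0},
          inner ℝ (gradient (bumpFn d z r) x) (y - x) * K x y|
      ≤ d * volume.real (ball (0 : EuclideanSpace ℝ (Fin d)) 1) *
          ∫ ρ in Ico r r0, 4 * Lam / r * f ρ⁻¹ := by
        rw [← Real.norm_eq_abs]
        simpa only [finrank_euclideanSpace_fin] using
          norm_setIntegral_annulus_le volume _ _ x hr r0
          ((integrableOn_Ico_comp_inv hfmono hr r0).const_mul _)
          (by simpa only [finrank_euclideanSpace_fin] using hbound)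
    _ ≤ 2 * π ^ ((d : ℝ) / 2) / Gamma (d / 2) * (4 * Lam / r * (f r⁻¹ * r / (a1 * (d1 - 1)))) := by
        rw [hsphere, integral_const_mul]
        gcongr
        exact integral_Ico_comp_inv_le (fun s t hs ht => (hscale s t hs ht).1) ha1 hd1' hfmono hr
          (hf0 _ (by positivity))
    _ = _ := by field_simp

theorem stmt8 (d : ℕ) (hd : 1 ≤ d) (r0 a1 a2 d1 d2 lam Lam : ℝ) (f : ℝ → ℝ)
    (J K : EuclideanSpace ℝ (Fin d) → EuclideanSpace ℝ (Fin d) → ℝ)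
    (hr0 : 0 < r0) (ha1 : 0 < a1) (ha2 : 0 < a2)
    (hd1 : d1 ∈ Set.Ioo (0:ℝ) 2) (hd2 : d2 ∈ Set.Ioo (0:ℝ) 2) (hd1' : 1 < d1)
    (hlam : 0 < lam) (hLam : lam ≤ Lam)
    (hf0 : ∀ s, 0 ≤ s → 0 ≤ f s)
    (hmono : ∀ s t, 0 ≤ s → s ≤ t → f s ≤ f t)
    (hscale : ∀ s t, 1 ≤ s → 1/r0 ≤ t →
      a1 * s ^ d1 * f t ≤ f (s * t) ∧ f (s * t) ≤ a2 * s ^ d2 * f t)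
    (hJ : ∀ x y, 0 < dist x y → dist x y < r0 →
      J x y = f (dist x y)⁻¹ / (dist x y) ^ (d : ℝ))
    (hK : ∀ x y, x ≠ y → lam * J x y ≤ K x y ∧ K x y ≤ Lam * J x y) :
    ∀ r : ℝ, 0 < r → r ≤ r0 → ∀ x z : EuclideanSpace ℝ (Fin d),
      |∫ y in {y : EuclideanSpace ℝ (Fin d) | r ≤ dist y x ∧ dist y x < r0},
          (inner ℝ (gradient (bumpFn d z r) x) (y - x) : ℝ) * K x y| ≤
        4 * (2 * Real.pi ^ ((d:ℝ)/2) / Real.Gamma ((d:ℝ)/2)) * Lam *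
          (1 / (a1 * (d1 - 1))) * f r⁻¹ :=
  stmt8_general d hd r0 a1 a2 d1 d2 lam Lam f J K ha1 hd1' hlam hLam hf0 hmono hscale hJ hK
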